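/- arXiv:1108.2174 — 7 statements merged into one kernel-verified Lean document; each statement's English description precedes it below -/
import Mathlib

section
/- Coning preserves nullity: the kernel of the cone rigidity matrix R*(G*o, p̄*) (with the cone joint fixed at the origin) has the same dimension as the kernel of the rigidity matrix R(G,p). Explicitly, the map sending an infinitesimal motion u of (G,p) in ℝ^d to the assignment i ↦ (u_i, -u_i·p_i) ∈ ℝ^{d+1} is a linear isomorphism from ker R(G,p) onto ker R*(G*o, p̄*). -/
/-- coning preserves the kernel of the rigidity matrix.
The map sending an infinitesimal motion `u` of `(G,p)` in `ℝ^d` to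
`i ↦ (u_i, -u_i · p_i) ∈ ℝ^{d+1}` is a linear isomorphism from the kernel of
`R(G,p)` (= the infinitesimal motions of `(G,p)`) onto the kernel of the cone
rigidity matrix `R*(G*o, p̄*)` (= the infinitesimal motions of the cone with
the cone joint fixed at the origin), where `p̄_i = (p_i, 1)`. -/
theorem coning_kernel_iso
    (n d : ℕ) (E : Finset (Fin n × Fin n)) (hE : ∀ e ∈ E, e.1 ≠ e.2)
    (p : Fin n → Fin d → ℝ)
    (pbar : Fin n → Fin (d + 1) → ℝ) (hpbar : ∀ i, pbar i = Fin.snoc (p i) 1) :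
    IsLinearMap ℝ
      (fun (u : Fin n → Fin d → ℝ) (i : Fin n) =>
        (Fin.snoc (u i) (-(∑ k : Fin d, u i k * p i k)) : Fin (d + 1) → ℝ)) ∧
    Set.BijOn
      (fun (u : Fin n → Fin d → ℝ) (i : Fin n) =>
        (Fin.snoc (u i) (-(∑ k : Fin d, u i k * p i k)) : Fin (d + 1) → ℝ))
      {u | ∀ e ∈ E, ∑ k : Fin d, (p e.1 k - p e.2 k) * (u e.1 k - u e.2 k) = 0}
      {v | (∀ e ∈ E, ∑ k : Fin (d + 1),
              (pbar e.1 k - pbar e.2 k) * (v e.1 k - v e.2 k) = 0) ∧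
           ∀ i, ∑ k : Fin (d + 1), pbar i k * v i k = 0} := by
  constructor
  · constructor
    · intro u v
      funext i k
      refine Fin.lastCases ?_ (fun j => by simp [Fin.snoc_castSucc]) k
      simp [Fin.snoc_last, add_mul, Finset.sum_add_distrib]; ring
    · intro c u
      funext i k
      refine Fin.lastCases ?_ (fun j => by simp [Fin.snoc_castSucc]) k
      simp [Fin.snoc_last, Finset.mul_sum, mul_assoc]
  · refine ⟨?_, ?_, ?_⟩
    · intro u hu
      constructor
      · intro e he
        rw [Fin.sum_univ_castSucc]
        simpa [hpbar, Fin.snoc_castSucc, Fin.snoc_last] using hu e he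
      · intro i
        rw [Fin.sum_univ_castSucc]
        simp [hpbar, Fin.snoc_castSucc, Fin.snoc_last, mul_comm]
    · intro u hu v hv h
      funext i k
      have := congrFun (congrFun h i) (Fin.castSucc k)
      simpa [Fin.snoc_castSucc] using this
    · intro v hv
      refine ⟨fun i k => v i (Fin.castSucc k), ?_, ?_⟩
      · intro e he
        have := hv.1 e he
        rw [Fin.sum_univ_castSucc] at this
        simpa [hpbar, Fin.snoc_castSucc, Fin.snoc_last] using this
      · funext i k
        refine Fin.lastCases ?_ (fun j => by simp [Fin.snoc_castSucc]) k
        have h2 := hv.2 i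
        rw [Fin.sum_univ_castSucc] at h2
        simp [hpbar, Fin.snoc_castSucc, Fin.snoc_last, mul_comm] at h2
        simp [Fin.snoc_last, mul_comm]
        linarith
end

section
/- Coning increases rank by exactly n: rank R*(G*o, p̄*) = rank R(G,p) + n, where n is the number of vertices of G. -/
/-- The rigidity matrix of `(G,p)` in `ℝ^d`. -/
def rigidityMatrix (n d : ℕ) (E : Finset (Fin n × Fin n)) (p : Fin n → Fin d → ℝ) :
    Matrix {e // e ∈ E} (Fin n × Fin d) ℝ :=
  fun e vk =>
    (if vk.1 = (e : Fin n × Fin n).1 then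
        p (e : Fin n × Fin n).1 vk.2 - p (e : Fin n × Fin n).2 vk.2 else 0) +
    (if vk.1 = (e : Fin n × Fin n).2 then
        p (e : Fin n × Fin n).2 vk.2 - p (e : Fin n × Fin n).1 vk.2 else 0)

/-- The cone rigidity matrix `R*(G*o, p̄*)` (cone joint fixed at the origin):
edge rows as in the rigidity matrix of `(G, p̄)` together with, for each vertex
`i`, a coning row with `p̄_i` in the columns of vertex `i`. -/
def coneRigidityMatrix (n d : ℕ) (E : Finset (Fin n × Fin n))
    (pbar : Fin n → Fin (d + 1) → ℝ) :
    Matrix ({e // e ∈ E} ⊕ Fin n) (Fin n × Fin (d + 1)) ℝ :=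
  fun r vk =>
    match r with
    | Sum.inl e =>
        (if vk.1 = (e : Fin n × Fin n).1 then
            pbar (e : Fin n × Fin n).1 vk.2 - pbar (e : Fin n × Fin n).2 vk.2 else 0) +
        (if vk.1 = (e : Fin n × Fin n).2 then
            pbar (e : Fin n × Fin n).2 vk.2 - pbar (e : Fin n × Fin n).1 vk.2 else 0)
    | Sum.inr i => if vk.1 = i then pbar i vk.2 else 0


open Matrix

section Aux

-- rectangular version of rank_submatrix
lemma rank_submatrix_equiv {m n m' n' : Type*} [Fintype n] [Fintype n']
    (A : Matrix m n ℝ) (e₁ : m' ≃ m) (e₂ : n' ≃ n) :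
    (A.submatrix e₁ e₂).rank = A.rank := by
  rw [Matrix.rank, Matrix.rank, Matrix.mulVecLin_submatrix, LinearMap.range_comp,
    LinearMap.range_comp,
    show LinearMap.funLeft ℝ ℝ e₂.symm = (LinearEquiv.funCongrLeft ℝ ℝ e₂.symm : _) from rfl,
    show LinearMap.funLeft ℝ ℝ e₁ = (LinearEquiv.funCongrLeft ℝ ℝ e₁ : _) from rfl,
    LinearEquiv.range, Submodule.map_top]
  exact LinearEquiv.finrank_map_eq _ _

lemma finrank_prod_submodule {M N : Type*} [AddCommGroup M] [AddCommGroup N]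
    [Module ℝ M] [Module ℝ N] [FiniteDimensional ℝ M] [FiniteDimensional ℝ N]
    (p : Submodule ℝ M) (q : Submodule ℝ N) :
    Module.finrank ℝ (p.prod q) = Module.finrank ℝ p + Module.finrank ℝ q := by
  have e : (p.prod q) ≃ₗ[ℝ] (p × q) :=
    { toFun := fun x => (⟨x.1.1, x.2.1⟩, ⟨x.1.2, x.2.2⟩)
      map_add' := fun x y => rfl
      map_smul' := fun c x => rfl
      invFun := fun x => ⟨(x.1.1, x.2.1), ⟨x.1.2, x.2.2⟩⟩
      left_inv := fun x => rfl
      right_inv := fun x => rfl }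
  rw [LinearEquiv.finrank_eq e, Module.finrank_prod]

lemma rank_fromBlocks_diag {m₁ m₂ n₁ n₂ : Type*} [Fintype m₁] [Fintype m₂]
    [Fintype n₁] [Fintype n₂]
    (A : Matrix m₁ n₁ ℝ) (B : Matrix m₂ n₂ ℝ) :
    (Matrix.fromBlocks A 0 0 B).rank = A.rank + B.rank := by
  classical
  set F := (Matrix.fromBlocks A 0 0 B).mulVecLin
  let e := LinearEquiv.sumArrowLequivProdArrow m₁ m₂ ℝ ℝ
  have hmap : (LinearMap.range F).map (e : (m₁ ⊕ m₂ → ℝ) →ₗ[ℝ] (m₁ → ℝ) × (m₂ → ℝ)) =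
      (LinearMap.range A.mulVecLin).prod (LinearMap.range B.mulVecLin) := by
    ext x
    simp only [Submodule.mem_map, LinearMap.mem_range, Submodule.mem_prod]
    constructor
    · rintro ⟨y, ⟨v, rfl⟩, rfl⟩
      constructor
      · refine ⟨v ∘ Sum.inl, ?_⟩
        simp [F, Matrix.mulVecLin_apply, Matrix.fromBlocks_mulVec, e,
          LinearEquiv.sumArrowLequivProdArrow, Equiv.sumArrowEquivProdArrow]
      · refine ⟨v ∘ Sum.inr, ?_⟩
        simp [F, Matrix.mulVecLin_apply, Matrix.fromBlocks_mulVec, e,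
          LinearEquiv.sumArrowLequivProdArrow, Equiv.sumArrowEquivProdArrow]
    · rintro ⟨⟨a, ha⟩, ⟨b, hb⟩⟩
      refine ⟨Sum.elim (A *ᵥ a) (B *ᵥ b), ⟨Sum.elim a b, ?_⟩, ?_⟩
      · simp [F, Matrix.mulVecLin_apply, Matrix.fromBlocks_mulVec]
      · rw [Matrix.mulVecLin_apply] at ha hb
        ext1 <;> simp [e, LinearEquiv.sumArrowLequivProdArrow,
          Equiv.sumArrowEquivProdArrow, ha, hb]
  have : (Matrix.fromBlocks A 0 0 B).rank = Module.finrank ℝ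
      ((LinearMap.range A.mulVecLin).prod (LinearMap.range B.mulVecLin)) := by
    rw [Matrix.rank, ← hmap, LinearEquiv.finrank_map_eq]
  rw [this, finrank_prod_submodule]
  rfl

end Aux
def colEquiv (n d : ℕ) : (Fin n × Fin d) ⊕ Fin n ≃ Fin n × Fin (d + 1) where
  toFun := Sum.elim (fun vk => (vk.1, vk.2.castSucc)) (fun v => (v, Fin.last d))
  invFun := fun vk => Fin.lastCases (Sum.inr vk.1) (fun k => Sum.inl (vk.1, k)) vk.2
  left_inv := by rintro (⟨v, k⟩ | v) <;> simp
  right_inv := by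
    rintro ⟨v, k⟩
    induction k using Fin.lastCases <;> simp


/-- coning increases the rank by exactly `n`:
`rank R*(G*o, p̄*) = rank R(G,p) + n`, where `p̄_i = (p_i, 1)`. -/
theorem coning_rank
    (n d : ℕ) (E : Finset (Fin n × Fin n)) (hE : ∀ e ∈ E, e.1 ≠ e.2)
    (p : Fin n → Fin d → ℝ) :
    (coneRigidityMatrix n d E (fun i => Fin.snoc (p i) 1)).rank =
      (rigidityMatrix n d E p).rank + n := by
  classical
  set R := rigidityMatrix n d E p with hR
  set P : Matrix (Fin n) (Fin n × Fin d) ℝ :=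
    fun i vk => if vk.1 = i then p i vk.2 else 0 with hP
  have key : (coneRigidityMatrix n d E (fun i => Fin.snoc (p i) 1)).submatrix
      (Equiv.refl _) (colEquiv n d) = Matrix.fromBlocks R 0 P 1 := by
    ext r c
    rcases r with e | i <;> rcases c with ⟨v, k⟩ | v <;>
      simp [coneRigidityMatrix, rigidityMatrix, colEquiv, Matrix.submatrix,
        R, P, Matrix.one_apply, Fin.snoc_castSucc, Fin.snoc_last, eq_comm,
          Matrix.fromBlocks, Matrix.of_apply, Matrix.zero_apply]
  have h1 := rank_submatrix_equiv (coneRigidityMatrix n d E (fun i => Fin.snoc (p i) 1))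
    (Equiv.refl _) (colEquiv n d)
  rw [key] at h1
  have h2 : Matrix.fromBlocks R 0 P (1 : Matrix (Fin n) (Fin n) ℝ) =
      @HMul.hMul _ _ _ Matrix.instHMulOfFintypeOfMulOfAddCommMonoid
        (Matrix.fromBlocks R 0 0 1) (Matrix.fromBlocks 1 0 P 1) := by
    rw [Matrix.fromBlocks_multiply]
    simp
  have h3 : IsUnit (Matrix.fromBlocks (1 : Matrix (Fin n × Fin d) _ ℝ) 0 P 1).det := by
    rw [Matrix.det_fromBlocks_zero₁₂]
    simp
  rw [← h1, h2, Matrix.rank_mul_eq_left_of_isUnit_det _ _ h3, rank_fromBlocks_diag,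
    Matrix.rank_one, Fintype.card_fin]
end

section
/- Coning induces an isomorphism of self-stress spaces: ω : E(G) → ℝ is a self-stress of (G,p) in ℝ^d if and only if the extension ω* assigning ω to the original edges and 0 to all coning edges {0,i} is a row dependency of the cone rigidity matrix R*(G*o, p̄*). Moreover, every row dependency of R*(G*o, p̄*) restricts to a self-stress of (G,p), and its values on the coning edges are uniquely determined; hence the two spaces are linearly isomorphic. -/
open Matrix

lemma cone_key (n d : ℕ) (E : Finset (Fin n × Fin n)) (p : Fin n → Fin d → ℝ)
    (ω : {e // e ∈ E} → ℝ) (c : Fin n → ℝ) :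
    (Sum.elim ω c) ᵥ* coneRigidityMatrix n d E (fun i => Fin.snoc (p i) 1) = 0 ↔
    (ω ᵥ* rigidityMatrix n d E p = 0 ∧ c = 0) := by
  have hval : ∀ (i : Fin n) (k : Fin (d + 1)),
      ((Sum.elim ω c) ᵥ* coneRigidityMatrix n d E (fun i => Fin.snoc (p i) 1)) (i, k) =
      (∑ e : {e // e ∈ E},
        ω e * coneRigidityMatrix n d E (fun i => Fin.snoc (p i) 1) (Sum.inl e) (i, k))
        + c i * (Fin.snoc (p i) 1 : Fin (d+1) → ℝ) k := by
    intro i k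
    simp [vecMul, dotProduct, Fintype.sum_sum_type, coneRigidityMatrix, mul_ite, eq_comm]
  have hlast : ∀ i : Fin n,
      ((Sum.elim ω c) ᵥ* coneRigidityMatrix n d E (fun i => Fin.snoc (p i) 1)) (i, Fin.last d)
      = c i := by
    intro i
    rw [hval]
    simp [coneRigidityMatrix, Fin.snoc_last]
  have hcast : ∀ (i : Fin n) (k : Fin d),
      ((Sum.elim ω c) ᵥ* coneRigidityMatrix n d E (fun i => Fin.snoc (p i) 1)) (i, k.castSucc)
      = (ω ᵥ* rigidityMatrix n d E p) (i, k) + c i * p i k := by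
    intro i k
    rw [hval]
    simp [coneRigidityMatrix, rigidityMatrix, vecMul, dotProduct, Fin.snoc_castSucc]
  constructor
  · intro h
    have hc : c = 0 := by
      funext i
      have := hlast i
      rw [h] at this
      simpa using this.symm
    refine ⟨?_, hc⟩
    funext ik
    obtain ⟨i, k⟩ := ik
    have := hcast i k
    rw [h, hc] at this
    simpa using this.symm
  · rintro ⟨hω, hc⟩
    funext ik
    obtain ⟨i, k⟩ := ik
    refine Fin.lastCases ?_ (fun k => ?_) k
    · rw [hlast, hc]; rfl
    · rw [hcast, hω, hc]; simp

lemma sum_elim_comp (α β γ : Type*) (w : α ⊕ β → γ) :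
    Sum.elim (w ∘ Sum.inl) (w ∘ Sum.inr) = w := by
  funext x; cases x <;> rfl

/-- coning induces an isomorphism of self-stress spaces.
`ω` is a self-stress of `(G,p)` iff its extension by `0` on the coning edges
is a row dependency of `R*(G*o,p̄*)`; every row dependency of `R*(G*o,p̄*)`
restricts to a self-stress of `(G,p)` and its values on the coning edges are
uniquely determined; hence `ω ↦ (ω, 0)` is a (linear) bijection between the two
spaces of self-stresses. -/
theorem coning_selfStress_iso
    (n d : ℕ) (E : Finset (Fin n × Fin n)) (hE : ∀ e ∈ E, e.1 ≠ e.2)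
    (p : Fin n → Fin d → ℝ) :
    (∀ ω : {e // e ∈ E} → ℝ,
        ω ᵥ* rigidityMatrix n d E p = 0 ↔
        (Sum.elim ω (0 : Fin n → ℝ)) ᵥ*
            coneRigidityMatrix n d E (fun i => Fin.snoc (p i) 1) = 0) ∧
    (∀ w : {e // e ∈ E} ⊕ Fin n → ℝ,
        w ᵥ* coneRigidityMatrix n d E (fun i => Fin.snoc (p i) 1) = 0 →
        ((w ∘ Sum.inl) ᵥ* rigidityMatrix n d E p = 0 ∧
          ∀ w' : {e // e ∈ E} ⊕ Fin n → ℝ,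
            w' ᵥ* coneRigidityMatrix n d E (fun i => Fin.snoc (p i) 1) = 0 →
            w' ∘ Sum.inl = w ∘ Sum.inl → w' = w)) ∧
    Set.BijOn (fun ω : {e // e ∈ E} → ℝ => Sum.elim ω (0 : Fin n → ℝ))
      {ω | ω ᵥ* rigidityMatrix n d E p = 0}
      {w | w ᵥ* coneRigidityMatrix n d E (fun i => Fin.snoc (p i) 1) = 0} := by
  have key : ∀ (ω : {e // e ∈ E} → ℝ) (c : Fin n → ℝ),
      (Sum.elim ω c) ᵥ* coneRigidityMatrix n d E (fun i => Fin.snoc (p i) 1) = 0 ↔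
      (ω ᵥ* rigidityMatrix n d E p = 0 ∧ c = 0) := cone_key n d E p
  have decomp : ∀ w : {e // e ∈ E} ⊕ Fin n → ℝ,
      w ᵥ* coneRigidityMatrix n d E (fun i => Fin.snoc (p i) 1) = 0 →
      (w ∘ Sum.inl) ᵥ* rigidityMatrix n d E p = 0 ∧ w ∘ Sum.inr = 0 := by
    intro w hw
    have := (key (w ∘ Sum.inl) (w ∘ Sum.inr)).mp (by rwa [sum_elim_comp])
    exact this
  refine ⟨?_, ?_, ?_, ?_, ?_⟩
  · intro ω
    rw [key]
    simp
  · intro w hw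
    obtain ⟨h1, h2⟩ := decomp w hw
    refine ⟨h1, fun w' hw' heq => ?_⟩
    obtain ⟨h1', h2'⟩ := decomp w' hw'
    funext x
    cases x with
    | inl e => exact congrFun heq e
    | inr i => rw [show w' (Sum.inr i) = (w' ∘ Sum.inr) i from rfl,
        show w (Sum.inr i) = (w ∘ Sum.inr) i from rfl, h2, h2']
  · intro ω hω
    exact (key ω 0).mpr ⟨hω, rfl⟩
  · intro ω _ ω' _ h
    funext e
    exact congrFun h (Sum.inl e)
  · intro w hw
    obtain ⟨h1, h2⟩ := decomp w hw
    exact ⟨w ∘ Sum.inl, h1, by simp only [← h2]; exact sum_elim_comp _ _ _ w⟩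
end

section
/- A framework (G,p) in ℝ^d has a nonzero self-stress if and only if the cone framework (G*o, p̄*) has a nonzero self-stress; equivalently, (G,p) is independent (its rigidity matrix has independent rows) if and only if (G*o, p̄*) is independent. -/
open Matrix

section aux

lemma cone_vecMul (n d : ℕ) (E : Finset (Fin n × Fin n))
    (pbar : Fin n → Fin (d + 1) → ℝ) (w : {e // e ∈ E} ⊕ Fin n → ℝ) (i : Fin n)
    (k : Fin (d+1)) :
    (w ᵥ* coneRigidityMatrix n d E pbar) (i, k) =
      (∑ e : {e // e ∈ E}, w (Sum.inl e) *
        ((if i = (e : Fin n × Fin n).1 then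
            pbar (e : Fin n × Fin n).1 k - pbar (e : Fin n × Fin n).2 k else 0) +
         (if i = (e : Fin n × Fin n).2 then
            pbar (e : Fin n × Fin n).2 k - pbar (e : Fin n × Fin n).1 k else 0)))
      + w (Sum.inr i) * pbar i k := by
  simp [Matrix.vecMul, dotProduct, coneRigidityMatrix, Fintype.sum_sum_type,
    mul_ite, Finset.sum_ite_eq]

lemma orig_vecMul (n d : ℕ) (E : Finset (Fin n × Fin n))
    (p : Fin n → Fin d → ℝ) (ω : {e // e ∈ E} → ℝ) (i : Fin n) (k : Fin d) :
    (ω ᵥ* rigidityMatrix n d E p) (i, k) =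
      ∑ e : {e // e ∈ E}, ω e *
        ((if i = (e : Fin n × Fin n).1 then
            p (e : Fin n × Fin n).1 k - p (e : Fin n × Fin n).2 k else 0) +
         (if i = (e : Fin n × Fin n).2 then
            p (e : Fin n × Fin n).2 k - p (e : Fin n × Fin n).1 k else 0)) := by
  simp [Matrix.vecMul, dotProduct, rigidityMatrix]

end aux

/-- `(G,p)` has a nonzero self-stress (row dependency of its
rigidity matrix) iff the cone framework `(G*o, p̄*)` has a nonzero self-stress;
equivalently `(G,p)` is independent iff `(G*o, p̄*)` is independent. -/
theorem coning_nonzero_selfStress_iff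
    (n d : ℕ) (E : Finset (Fin n × Fin n)) (hE : ∀ e ∈ E, e.1 ≠ e.2)
    (p : Fin n → Fin d → ℝ) :
    (∃ ω : {e // e ∈ E} → ℝ, ω ≠ 0 ∧ ω ᵥ* rigidityMatrix n d E p = 0) ↔
    (∃ w : {e // e ∈ E} ⊕ Fin n → ℝ, w ≠ 0 ∧
        w ᵥ* coneRigidityMatrix n d E (fun i => Fin.snoc (p i) 1) = 0) := by
  constructor
  · rintro ⟨ω, hω, h⟩
    refine ⟨Sum.elim ω 0, ?_, ?_⟩
    · intro hw
      apply hω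
      funext e
      exact congrFun hw (Sum.inl e)
    · funext vk
      obtain ⟨i, k⟩ := vk
      rw [cone_vecMul]
      induction k using Fin.lastCases with
      | last =>
        simp [Fin.snoc_last]
      | cast k =>
        have := congrFun h (i, k)
        rw [orig_vecMul] at this
        simpa [Fin.snoc_castSucc] using this
  · rintro ⟨w, hw, h⟩
    have hcone : ∀ i : Fin n, w (Sum.inr i) = 0 := by
      intro i
      have := congrFun h (i, Fin.last d)
      rw [cone_vecMul] at this
      simpa [Fin.snoc_last] using this
    refine ⟨fun e => w (Sum.inl e), ?_, ?_⟩
    · intro h0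
      apply hw
      funext r
      cases r with
      | inl e => exact congrFun h0 e
      | inr i => exact hcone i
    · funext vk
      obtain ⟨i, k⟩ := vk
      have := congrFun h (i, Fin.castSucc k)
      rw [cone_vecMul] at this
      rw [orig_vecMul]
      simpa [Fin.snoc_castSucc, hcone i] using this
end

section
/- Kernel of the Minkowskian cone rigidity matrix: the map sending an infinitesimal motion u of (G,p) in ℝ^d to v with v_i = (u_i, u_i·p_i) ∈ ℝ^{d+1} is a linear isomorphism from the kernel of R(G,p) onto the kernel of the Minkowskian cone rigidity matrix R*^M(G*o, p̄*), where p̄_i = (p_i,1). In particular the two kernels have equal dimension. -/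
/-- kernel of the Minkowskian cone rigidity matrix.  The map
sending an infinitesimal motion `u` of `(G,p)` in `ℝ^d` to `v` with
`v_i = (u_i, u_i · p_i)` is a linear isomorphism from the kernel of `R(G,p)`
onto the kernel of the Minkowskian cone rigidity matrix `R*^M(G*o, p̄*)`,
described by the conditions `(p̂̄_i - p̂̄_j)·(v_i - v_j) = 0` for edges and
`p̂̄_i · v_i = 0` for all `i`, where `p̂̄_i = (p_i, -1)`. -/
theorem minkowski_coning_kernel_iso
    (n d : ℕ) (E : Finset (Fin n × Fin n)) (hE : ∀ e ∈ E, e.1 ≠ e.2)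
    (p : Fin n → Fin d → ℝ)
    (phat : Fin n → Fin (d + 1) → ℝ)
    (hphat : ∀ i, phat i = Fin.snoc (p i) (-1)) :
    IsLinearMap ℝ
      (fun (u : Fin n → Fin d → ℝ) (i : Fin n) =>
        (Fin.snoc (u i) (∑ k : Fin d, u i k * p i k) : Fin (d + 1) → ℝ)) ∧
    Set.BijOn
      (fun (u : Fin n → Fin d → ℝ) (i : Fin n) =>
        (Fin.snoc (u i) (∑ k : Fin d, u i k * p i k) : Fin (d + 1) → ℝ))
      {u | ∀ e ∈ E, ∑ k : Fin d, (p e.1 k - p e.2 k) * (u e.1 k - u e.2 k) = 0}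
      {v | (∀ e ∈ E, ∑ k : Fin (d + 1),
              (phat e.1 k - phat e.2 k) * (v e.1 k - v e.2 k) = 0) ∧
           ∀ i, ∑ k : Fin (d + 1), phat i k * v i k = 0} := by
  set Φ := fun (u : Fin n → Fin d → ℝ) (i : Fin n) =>
      (Fin.snoc (u i) (∑ k : Fin d, u i k * p i k) : Fin (d + 1) → ℝ) with hΦ
  constructor
  · constructor
    · intro u w
      funext i k
      refine Fin.lastCases ?_ ?_ k
      · simp [Φ, Finset.sum_add_distrib, add_mul]
      · intro j
        simp [Φ]
    · intro c u
      funext i k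
      refine Fin.lastCases ?_ ?_ k
      · simp [Φ, Finset.mul_sum, mul_assoc]
      · intro j
        simp [Φ]
  · refine ⟨?_, ?_, ?_⟩
    · intro u hu
      constructor
      · intro e he
        rw [Fin.sum_univ_castSucc]
        simp only [Φ, hphat, Fin.snoc_castSucc, Fin.snoc_last]
        simpa using hu e he
      · intro i
        rw [Fin.sum_univ_castSucc]
        simp only [Φ, hphat, Fin.snoc_castSucc, Fin.snoc_last]
        ring_nf
        rw [Finset.sum_congr rfl (fun k _ => mul_comm (p i k) (u i k))]
        ring
    · intro u hu w hw h
      funext i k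
      have := congrFun (congrFun h i) (Fin.castSucc k)
      simpa [Φ] using this
    · intro v hv
      refine ⟨fun i k => v i (Fin.castSucc k), ?_, ?_⟩
      · intro e he
        have := hv.1 e he
        rw [Fin.sum_univ_castSucc] at this
        simpa [hphat] using this
      · funext i k
        refine Fin.lastCases ?_ ?_ k
        · have := hv.2 i
          rw [Fin.sum_univ_castSucc] at this
          simp only [hphat, Fin.snoc_castSucc, Fin.snoc_last] at this
          simp only [Φ, Fin.snoc_last]
          have h2 : v i (Fin.last d) = ∑ k : Fin d, p i k * v i (Fin.castSucc k) := by
            linarith [this]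
          rw [Finset.sum_congr rfl (fun k _ => mul_comm (v i (Fin.castSucc k)) (p i k))]
          exact h2.symm
        · intro j
          simp [Φ]
end

section
/- Transfer to the upper hemisphere preserves kernels: let p_1,...,p_n ∈ ℝ^d and q_i = p̄_i/‖p̄_i‖ ∈ 𝕊^d_+ where p̄_i = (p_i,1). Then the space {u : (p_i-p_j)·(u_i-u_j) = 0 for all edges {i,j}} is linearly isomorphic to the space {v ∈ (ℝ^{d+1})^n : (q_i - q_j)·(v_i - v_j) = 0 for all edges {i,j}, and q_i·v_i = 0 for all i} of spherical infinitesimal motions of (G,q). -/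
/-- transfer to the upper hemisphere preserves kernels.  With
`p̄_i = (p_i, 1)` and `q_i = p̄_i / ‖p̄_i‖ ∈ 𝕊^d₊`, the space of infinitesimal
motions of `(G,p)` in `ℝ^d` is linearly isomorphic to the space of spherical
infinitesimal motions of `(G,q)`. -/
theorem hemisphere_kernel_iso
    (n d : ℕ) (E : Finset (Fin n × Fin n)) (hE : ∀ e ∈ E, e.1 ≠ e.2)
    (p : Fin n → Fin d → ℝ)
    (q : Fin n → Fin (d + 1) → ℝ)
    (hq : ∀ i k, q i k =
        (Fin.snoc (p i) 1 : Fin (d + 1) → ℝ) k /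
          Real.sqrt (∑ k' : Fin (d + 1), ((Fin.snoc (p i) 1 : Fin (d + 1) → ℝ) k') ^ 2)) :
    ∃ Φ : (Fin n → Fin d → ℝ) → (Fin n → Fin (d + 1) → ℝ),
      IsLinearMap ℝ Φ ∧
      Set.BijOn Φ
        {u | ∀ e ∈ E, ∑ k : Fin d, (p e.1 k - p e.2 k) * (u e.1 k - u e.2 k) = 0}
        {v | (∀ e ∈ E, ∑ k : Fin (d + 1),
                (q e.1 k - q e.2 k) * (v e.1 k - v e.2 k) = 0) ∧
             ∀ i, ∑ k : Fin (d + 1), q i k * v i k = 0} := by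
  classical
  set s : Fin n → ℝ := fun i =>
    Real.sqrt (∑ k' : Fin (d + 1), ((Fin.snoc (p i) 1 : Fin (d + 1) → ℝ) k') ^ 2) with hs
  have hspos : ∀ i, 0 < s i := by
    intro i
    apply Real.sqrt_pos.2
    rw [Fin.sum_univ_castSucc]
    simp only [Fin.snoc_castSucc, Fin.snoc_last, one_pow]
    positivity
  have hsne : ∀ i, s i ≠ 0 := fun i => (hspos i).ne'
  have hq' : ∀ i k, q i k = (Fin.snoc (p i) 1 : Fin (d + 1) → ℝ) k / s i := hq
  set Φ : (Fin n → Fin d → ℝ) → (Fin n → Fin (d + 1) → ℝ) := fun u i k =>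
    (Fin.snoc (u i) (-(∑ k' : Fin d, p i k' * u i k')) : Fin (d + 1) → ℝ) k / s i with hΦ
  have key : ∀ (u : Fin n → Fin d → ℝ) (i j : Fin n),
      ∑ k : Fin (d + 1), (q i k - q j k) * (Φ u i k - Φ u j k)
        = (∑ k : Fin d, (p i k - p j k) * (u i k - u j k)) / (s i * s j) := by
    intro u i j
    simp only [hq', hΦ]
    rw [Fin.sum_univ_castSucc]
    simp only [Fin.snoc_castSucc, Fin.snoc_last]
    have hpt : ∀ k : Fin d,
        (p i k / s i - p j k / s j) * (u i k / s i - u j k / s j)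
          = (p i k - p j k) * (u i k - u j k) / (s i * s j)
            + (1 / (s i * s i) - 1 / (s i * s j)) * (p i k * u i k)
            + (1 / (s j * s j) - 1 / (s i * s j)) * (p j k * u j k) := by
      intro k
      ring
    rw [Finset.sum_congr rfl fun k _ => hpt k]
    rw [Finset.sum_add_distrib, Finset.sum_add_distrib, ← Finset.sum_div,
        ← Finset.mul_sum, ← Finset.mul_sum]
    ring
  have tang : ∀ (u : Fin n → Fin d → ℝ) (i : Fin n),
      ∑ k : Fin (d + 1), q i k * Φ u i k = 0 := by
    intro u i
    simp only [hq', hΦ]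
    rw [Fin.sum_univ_castSucc]
    simp only [Fin.snoc_castSucc, Fin.snoc_last]
    have hpt : ∀ k : Fin d, p i k / s i * (u i k / s i)
        = p i k * u i k * (1 / (s i * s i)) := fun k => by ring
    rw [Finset.sum_congr rfl fun k _ => hpt k, ← Finset.sum_mul]
    ring
  have hlin : IsLinearMap ℝ Φ := by
    constructor
    · intro u u'
      funext i k
      refine Fin.lastCases ?_ (fun k0 => ?_) k
      · simp only [hΦ, Pi.add_apply, Fin.snoc_last, mul_add, Finset.sum_add_distrib]
        ring
      · simp only [hΦ, Pi.add_apply, Fin.snoc_castSucc]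
        ring
    · intro c u
      funext i k
      refine Fin.lastCases ?_ (fun k0 => ?_) k
      · simp only [hΦ, Pi.smul_apply, smul_eq_mul, Fin.snoc_last]
        have h3 : ∑ k' : Fin d, p i k' * (c * u i k')
            = c * ∑ k' : Fin d, p i k' * u i k' := by
          rw [Finset.mul_sum]
          exact Finset.sum_congr rfl fun k _ => by ring
        rw [h3]
        ring
      · simp only [hΦ, Pi.smul_apply, smul_eq_mul, Fin.snoc_castSucc]
        ring
  refine ⟨Φ, hlin, ?_, ?_, ?_⟩
  · -- MapsTo
    intro u hu
    constructor
    · intro e he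
      rw [key u e.1 e.2, hu e he, zero_div]
    · intro i
      exact tang u i
  · -- InjOn
    intro u _ u' _ h
    funext i k
    have h1 := congrFun (congrFun h i) (Fin.castSucc k)
    simp only [hΦ, Fin.snoc_castSucc] at h1
    field_simp [hsne i] at h1
    exact h1
  · -- SurjOn
    intro v hv
    have hphi : Φ (fun i k => s i * v i (Fin.castSucc k)) = v := by
      funext i k
      refine Fin.lastCases ?_ (fun k0 => ?_) k
      · simp only [hΦ, Fin.snoc_last]
        have h0 : (∑ k' : Fin d, p i k' * v i (Fin.castSucc k')) + v i (Fin.last d) = 0 := by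
          have h1 := hv.2 i
          simp only [hq'] at h1
          rw [Fin.sum_univ_castSucc] at h1
          simp only [Fin.snoc_castSucc, Fin.snoc_last] at h1
          have h2 : ∀ k : Fin d, p i k / s i * v i (Fin.castSucc k)
              = p i k * v i (Fin.castSucc k) / s i := fun k => by ring
          rw [Finset.sum_congr rfl fun k _ => h2 k, ← Finset.sum_div] at h1
          field_simp [hsne i] at h1
          linarith [h1]
        have h3 : ∑ k' : Fin d, p i k' * (s i * v i (Fin.castSucc k'))
            = s i * ∑ k' : Fin d, p i k' * v i (Fin.castSucc k') := by
          rw [Finset.mul_sum]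
          exact Finset.sum_congr rfl fun k _ => by ring
        rw [h3, neg_div, mul_div_cancel_left₀ _ (hsne i)]
        linarith [h0]
      · simp only [hΦ, Fin.snoc_castSucc]
        exact mul_div_cancel_left₀ _ (hsne i)
    refine ⟨fun i k => s i * v i (Fin.castSucc k), ?_, hphi⟩
    intro e he
    have h5 := key (fun i k => s i * v i (Fin.castSucc k)) e.1 e.2
    rw [hphi, hv.1 e he] at h5
    rcases div_eq_zero_iff.mp h5.symm with h | h
    · exact h
    · exact absurd h (mul_ne_zero (hsne e.1) (hsne e.2))
end

section
/- Hyperbolic transfer of kernels: let p_1,...,p_n ∈ ℝ^d with Euclidean norm ‖p_i‖ < 1, and let r_i = p̄_i/√(1 - ‖p_i‖²) where p̄_i = (p_i, 1), so that ‖r_i‖²_M = -1 (each r_i lies on the hyperboloid model of ℍ^d). Then the space {u : (p_i - p_j)·(u_i - u_j) = 0 for all edges} of Euclidean infinitesimal motions of (G,p) is linearly isomorphic to the space {v : ⟨r_i - r_j, v_i - v_j⟩_M = 0 for all edges {i,j}, and ⟨r_i, v_i⟩_M = 0 for all i}, where ⟨a,b⟩_M = a_1b_1 + ... + a_d b_d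 - a_{d+1}b_{d+1}. -/
/-- The Minkowskian bilinear form
`⟨a,b⟩_M = a_1 b_1 + ⋯ + a_d b_d − a_{d+1} b_{d+1}` on `ℝ^{d+1}`. -/
def minkowskiForm (d : ℕ) (x y : Fin (d + 1) → ℝ) : ℝ :=
  (∑ k : Fin d, x (Fin.castSucc k) * y (Fin.castSucc k)) -
    x (Fin.last d) * y (Fin.last d)

/-- Auxiliary transfer map: `u ↦ (u_i, p_i · u_i) / q_i`. -/
noncomputable def hypPhi (n d : ℕ) (p : Fin n → Fin d → ℝ) (q : Fin n → ℝ)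
    (u : Fin n → Fin d → ℝ) : Fin n → Fin (d + 1) → ℝ :=
  fun i k => (Fin.snoc (u i) (∑ k' : Fin d, p i k' * u i k') : Fin (d + 1) → ℝ) k / q i

lemma hypPhi_castSucc (n d : ℕ) (p : Fin n → Fin d → ℝ) (q : Fin n → ℝ)
    (u : Fin n → Fin d → ℝ) (i : Fin n) (k : Fin d) :
    hypPhi n d p q u i (Fin.castSucc k) = u i k / q i := by
  simp [hypPhi]

lemma hypPhi_last (n d : ℕ) (p : Fin n → Fin d → ℝ) (q : Fin n → ℝ)
    (u : Fin n → Fin d → ℝ) (i : Fin n) :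
    hypPhi n d p q u i (Fin.last d) = (∑ k' : Fin d, p i k' * u i k') / q i := by
  simp [hypPhi]

/-- Abstract form of the key algebraic identity. -/
lemma hypSumKey (d : ℕ) (P U Pj Uj : Fin d → ℝ) (qi qj : ℝ)
    (hi : qi ≠ 0) (hj : qj ≠ 0) :
    ∑ k : Fin d, (P k / qi - Pj k / qj) * (U k / qi - Uj k / qj) -
      (1 / qi - 1 / qj) * ((∑ k, P k * U k) / qi - (∑ k, Pj k * Uj k) / qj) =
      (∑ k : Fin d, (P k - Pj k) * (U k - Uj k)) / (qi * qj) := by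
  have h1 : ∀ k : Fin d,
      (P k / qi - Pj k / qj) * (U k / qi - Uj k / qj) =
        (P k - Pj k) * (U k - Uj k) / (qi * qj)
          + (P k * U k) * (qj - qi) / (qi * qi * qj)
          + (Pj k * Uj k) * (qi - qj) / (qi * qj * qj) := by
    intro k; field_simp; ring
  rw [Finset.sum_congr rfl fun k _ => h1 k]
  rw [Finset.sum_add_distrib, Finset.sum_add_distrib, ← Finset.sum_div,
    ← Finset.sum_div, ← Finset.sum_div, ← Finset.sum_mul, ← Finset.sum_mul]
  field_simp
  ring

/-- Key computation: the Minkowski edge form of transferred motions equals the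
Euclidean edge form divided by `q i * q j`. -/
lemma hypKey (n d : ℕ) (p : Fin n → Fin d → ℝ) (q : Fin n → ℝ)
    (hq : ∀ i, q i ≠ 0) (r : Fin n → Fin (d + 1) → ℝ)
    (hr : ∀ i k, r i k = (Fin.snoc (p i) 1 : Fin (d + 1) → ℝ) k / q i)
    (u : Fin n → Fin d → ℝ) (i j : Fin n) :
    minkowskiForm d (r i - r j) (hypPhi n d p q u i - hypPhi n d p q u j) =
      (∑ k : Fin d, (p i k - p j k) * (u i k - u j k)) / (q i * q j) := by
  unfold minkowskiForm
  simp only [Pi.sub_apply, hr, hypPhi_castSucc, hypPhi_last, Fin.snoc_castSucc, Fin.snoc_last]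
  exact hypSumKey d (p i) (u i) (p j) (u j) (q i) (q j) (hq i) (hq j)

/-- Tangency is automatic for transferred motions. -/
lemma hypTangent (n d : ℕ) (p : Fin n → Fin d → ℝ) (q : Fin n → ℝ)
    (hq : ∀ i, q i ≠ 0) (r : Fin n → Fin (d + 1) → ℝ)
    (hr : ∀ i k, r i k = (Fin.snoc (p i) 1 : Fin (d + 1) → ℝ) k / q i)
    (u : Fin n → Fin d → ℝ) (i : Fin n) :
    minkowskiForm d (r i) (hypPhi n d p q u i) = 0 := by
  unfold minkowskiForm
  simp only [hr, hypPhi_castSucc, hypPhi_last, Fin.snoc_castSucc, Fin.snoc_last]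
  have h1 : ∀ k : Fin d, p i k / q i * (u i k / q i) = p i k * u i k / (q i * q i) := by
    intro k; field_simp
  rw [Finset.sum_congr rfl fun k _ => h1 k, ← Finset.sum_div]
  field_simp [hq i]
  ring

/-- hyperbolic transfer of kernels.  Let `‖p_i‖ < 1` and
`r_i = (p_i, 1) / √(1 - ‖p_i‖²)`, so `⟨r_i, r_i⟩_M = -1` (the hyperboloid model
of `ℍ^d`).  Then the space of Euclidean infinitesimal motions of `(G,p)` is
linearly isomorphic to the space of hyperbolic infinitesimal motions
`{v : ⟨r_i - r_j, v_i - v_j⟩_M = 0 for all edges, ⟨r_i, v_i⟩_M = 0 for all i}`. -/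
theorem hyperbolic_kernel_iso
    (n d : ℕ) (E : Finset (Fin n × Fin n)) (hE : ∀ e ∈ E, e.1 ≠ e.2)
    (p : Fin n → Fin d → ℝ) (hp : ∀ i, ∑ k : Fin d, (p i k) ^ 2 < 1)
    (r : Fin n → Fin (d + 1) → ℝ)
    (hr : ∀ i k, r i k =
        (Fin.snoc (p i) 1 : Fin (d + 1) → ℝ) k /
          Real.sqrt (1 - ∑ k' : Fin d, (p i k') ^ 2)) :
    ∃ Φ : (Fin n → Fin d → ℝ) → (Fin n → Fin (d + 1) → ℝ),
      IsLinearMap ℝ Φ ∧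
      Set.BijOn Φ
        {u | ∀ e ∈ E, ∑ k : Fin d, (p e.1 k - p e.2 k) * (u e.1 k - u e.2 k) = 0}
        {v | (∀ e ∈ E,
                minkowskiForm d (r e.1 - r e.2) (v e.1 - v e.2) = 0) ∧
             ∀ i, minkowskiForm d (r i) (v i) = 0} := by
  set q : Fin n → ℝ := fun i => Real.sqrt (1 - ∑ k' : Fin d, (p i k') ^ 2) with hqdef
  have hq0 : ∀ i, 0 < q i := fun i => Real.sqrt_pos.2 (by linarith [hp i])
  have hq : ∀ i, q i ≠ 0 := fun i => ne_of_gt (hq0 i)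
  have hr' : ∀ i k, r i k = (Fin.snoc (p i) 1 : Fin (d + 1) → ℝ) k / q i := hr
  refine ⟨hypPhi n d p q, ?_, ?_, ?_, ?_⟩
  · constructor
    · intro u u'
      funext i k
      refine Fin.lastCases ?_ (fun k => ?_) k
      · simp [hypPhi_last, Pi.add_apply, mul_add, Finset.sum_add_distrib, add_div]
      · simp [hypPhi_castSucc, Pi.add_apply, add_div]
    · intro c u
      funext i k
      simp only [Pi.smul_apply, smul_eq_mul]
      refine Fin.lastCases ?_ (fun k => ?_) k
      · rw [hypPhi_last, hypPhi_last]
        have h3 : ∑ k' : Fin d, p i k' * (c • u) i k'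
            = c * ∑ k' : Fin d, p i k' * u i k' := by
          rw [Finset.mul_sum]
          exact Finset.sum_congr rfl fun k' _ => by
            simp only [Pi.smul_apply, smul_eq_mul]; ring
        rw [h3, mul_div_assoc]
      · rw [hypPhi_castSucc, hypPhi_castSucc]
        simp only [Pi.smul_apply, smul_eq_mul, mul_div_assoc]
  · -- MapsTo
    intro u hu
    refine ⟨fun e he => ?_, fun i => hypTangent n d p q hq r hr' u i⟩
    rw [hypKey n d p q hq r hr' u e.1 e.2, hu e he, zero_div]
  · -- InjOn
    intro u _ u' _ h
    funext i k
    have h2 : u i k / q i = u' i k / q i := by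
      have := congrFun (congrFun h i) (Fin.castSucc k)
      rwa [hypPhi_castSucc, hypPhi_castSucc] at this
    rw [div_eq_div_iff (hq i) (hq i)] at h2
    exact mul_right_cancel₀ (hq i) h2
  · -- SurjOn
    intro v hv
    obtain ⟨hv1, hv2⟩ := hv
    set u : Fin n → Fin d → ℝ := fun i k => v i (Fin.castSucc k) * q i with hudef
    have hsum : ∀ i, ∑ k : Fin d, p i k * v i (Fin.castSucc k) = v i (Fin.last d) := by
      intro i
      have h := hv2 i
      unfold minkowskiForm at h
      simp only [hr', Fin.snoc_castSucc, Fin.snoc_last] at h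
      have h1 : ∀ k : Fin d, p i k / q i * v i (Fin.castSucc k)
          = p i k * v i (Fin.castSucc k) / q i := fun k => by ring
      rw [Finset.sum_congr rfl fun k _ => h1 k, ← Finset.sum_div] at h
      rw [one_div, inv_mul_eq_div, div_sub_div_same] at h
      have h4 := (div_eq_zero_iff.mp h).resolve_right (hq i)
      linarith
    have hPhiu : hypPhi n d p q u = v := by
      funext i k
      refine Fin.lastCases ?_ (fun k => ?_) k
      · rw [hypPhi_last]
        have h3 : ∑ k' : Fin d, p i k' * u i k'
            = (∑ k' : Fin d, p i k' * v i (Fin.castSucc k')) * q i := by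
          rw [Finset.sum_mul]
          exact Finset.sum_congr rfl fun k' _ => by simp [hudef]; ring
        rw [h3, hsum i, mul_div_assoc, div_self (hq i), mul_one]
      · rw [hypPhi_castSucc, hudef]
        exact mul_div_cancel_right₀ _ (hq i)
    refine ⟨u, ?_, hPhiu⟩
    intro e he
    have hk := hypKey n d p q hq r hr' u e.1 e.2
    rw [hPhiu, hv1 e he] at hk
    have := hk.symm
    rw [div_eq_zero_iff] at this
    rcases this with h | h
    · exact h
    · exact absurd h (mul_ne_zero (hq e.1) (hq e.2))
end
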